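/- Let X ∈ ℝ^{d_1×⋯×d_k} and δ = (δ_1,…,δ_k) ∈ (0,1]^k be such that δ_j ≥ max{‖P_j(X)u‖_{ℓ∞} : u ∈ ℝ^{d_j}, ‖u‖_{ℓ2} ≤ 1} for every j. Let W₀ ∈ ℝ^{d_1×⋯×d_k} satisfy Q⁰_X W₀ = W₀ and ‖W₀‖ ≤ 1 (spectral norm). Then for every W₁ ∈ ℝ^{d_1×⋯×d_k} with ‖W₁‖_{∘,δ} ≤ 2/(k(k−1)), one has ‖W₀ + Q_X^⊥ W₁‖_{∘,δ} ≤ 1. -/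

import Mathlib

open scoped BigOperators

namespace IncoherentTensor

variable {k : ℕ}

/-- A `k`-th order tensor in `ℝ^{d 1 × ⋯ × d k}`. -/
abbrev Tensor (d : Fin k → ℕ) : Type := (∀ j, Fin (d j)) → ℝ

variable {d : Fin k → ℕ}

/-- Entrywise inner product of tensors. -/
noncomputable def tinner (X Y : Tensor d) : ℝ := ∑ a : ∀ j, Fin (d j), X a * Y a

/-- Hilbert–Schmidt (entrywise ℓ2) norm. -/
noncomputable def hsNorm (X : Tensor d) : ℝ := Real.sqrt (tinner X X)

/-- Largest absolute entry. -/
noncomputable def maxNorm (X : Tensor d) : ℝ := ⨆ a, |X a|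

/-- Euclidean norm of a vector. -/
noncomputable def l2 {n : ℕ} (u : Fin n → ℝ) : ℝ := Real.sqrt (∑ i, u i ^ 2)

/-- Supremum norm of a vector. -/
noncomputable def linf {n : ℕ} (u : Fin n → ℝ) : ℝ := ⨆ i, |u i|

/-- Rank-one tensor `u_1 ⊗ ⋯ ⊗ u_k`. -/
def rankOne (u : ∀ j, Fin (d j) → ℝ) : Tensor d := fun a => ∏ j, u j (a j)

/-- Tensor spectral norm. -/
noncomputable def spectralNorm (X : Tensor d) : ℝ :=
  sSup {r | ∃ u : ∀ j, Fin (d j) → ℝ, (∀ j, l2 (u j) ≤ 1) ∧ r = tinner X (rankOne u)}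

/-- Tensor nuclear norm. -/
noncomputable def nuclearNorm (X : Tensor d) : ℝ :=
  sSup {r | ∃ Y : Tensor d, spectralNorm Y ≤ 1 ∧ r = tinner X Y}

/-- The set `U(δ)` of rank-one tensors satisfying the incoherence constraints in all but
two directions. -/
def Uset (δ : Fin k → ℝ) : Set (Tensor d) :=
  {Y | ∃ j1 j2 : Fin k, j1 < j2 ∧ ∃ u : ∀ j, Fin (d j) → ℝ,
    (∀ j, l2 (u j) ≤ 1) ∧ (∀ j, j ≠ j1 → j ≠ j2 → linf (u j) ≤ δ j) ∧ Y = rankOne u}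

/-- Incoherent spectral norm `‖X‖_{∘,δ}`. -/
noncomputable def onorm (δ : Fin k → ℝ) (X : Tensor d) : ℝ :=
  sSup {r | ∃ Y ∈ Uset (d := d) δ, r = tinner Y X}

/-- Incoherent nuclear norm `‖X‖_{⋆,δ}`. -/
noncomputable def starNorm (δ : Fin k → ℝ) (X : Tensor d) : ℝ :=
  sSup {r | ∃ Y : Tensor d, onorm δ Y ≤ 1 ∧ r = tinner Y X}

/-- The span `L_j(X)` of the mode-`j` fibers of `X`. -/
noncomputable def fiberSpan (X : Tensor d) (j : Fin k) :
    Submodule ℝ (EuclideanSpace ℝ (Fin (d j))) :=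
  Submodule.span ℝ {v | ∃ a : ∀ i, Fin (d i), v = fun i => X (Function.update a j i)}

/-- Tucker rank `r_j(X) = dim L_j(X)`. -/
noncomputable def tuckerRank (X : Tensor d) (j : Fin k) : ℕ :=
  Module.finrank ℝ (fiberSpan X j)

/-- Orthogonal projection `P_j(X)` of `ℝ^{d_j}` onto `L_j(X)`. -/
noncomputable def projMode (X : Tensor d) (j : Fin k) :
    EuclideanSpace ℝ (Fin (d j)) →L[ℝ] EuclideanSpace ℝ (Fin (d j)) :=
  (fiberSpan X j).subtypeL.comp ((fiberSpan X j).orthogonalProjection)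

/-- The matrix of `P_j(X)` in the standard basis. -/
noncomputable def Pmat (X : Tensor d) (j : Fin k) : Matrix (Fin (d j)) (Fin (d j)) ℝ :=
  Matrix.of fun a b => projMode X j (EuclideanSpace.single b 1) a

/-- Action of a Kronecker product `A_1 ⊗ ⋯ ⊗ A_k` of matrices on a tensor. -/
noncomputable def kronApply (A : ∀ j, Matrix (Fin (d j)) (Fin (d j)) ℝ) (W : Tensor d) :
    Tensor d :=
  fun a => ∑ b : ∀ j, Fin (d j), (∏ j, A j (a j) (b j)) * W b

/-- `Q⁰_X = P_1 ⊗ ⋯ ⊗ P_k`. -/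
noncomputable def Q0 (X : Tensor d) (W : Tensor d) : Tensor d :=
  kronApply (fun j => Pmat X j) W

/-- `Q_X = Q⁰_X + Σ_j P_1 ⊗ ⋯ ⊗ P_j^⊥ ⊗ ⋯ ⊗ P_k`. -/
noncomputable def QX (X : Tensor d) (W : Tensor d) : Tensor d :=
  Q0 X W + ∑ j : Fin k, kronApply (fun l => if l = j then 1 - Pmat X l else Pmat X l) W

/-- `Q_X^⊥ = I − Q_X`. -/
noncomputable def Qperp (X : Tensor d) (W : Tensor d) : Tensor d := W - QX X W

/-- Coherence `μ(U)` of a subspace of `ℝ^n`. -/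
noncomputable def coherence {n : ℕ} (U : Submodule ℝ (EuclideanSpace ℝ (Fin n))) : ℝ :=
  ((n : ℝ) / (Module.finrank ℝ U : ℝ)) *
    ⨆ i : Fin n, ‖U.orthogonalProjection (EuclideanSpace.single i 1)‖ ^ 2

/-- Probability of an event on a finite sample space, under the uniform distribution. -/
noncomputable def prob {Ω : Type*} [Fintype Ω] (P : Ω → Prop) : ℝ :=
  (Nat.card {ω : Ω // P ω} : ℝ) / (Fintype.card Ω : ℝ)

/-- `P_ω X` retains the entry `ω` of `X` and zeroes out the rest. -/
noncomputable def Pentry (ω : ∀ j, Fin (d j)) (X : Tensor d) : Tensor d :=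
  fun a => if a = ω then X a else 0

/-- `P_Ω X` retains the entries of `X` on `Ω` and zeroes out the rest. -/
noncomputable def POmega (S : Finset (∀ j, Fin (d j))) (X : Tensor d) : Tensor d :=
  fun a => if a ∈ S then X a else 0

/-- The empirical average `X̄ = (X_1 + ⋯ + X_n)/n` of `X_i = (d_1⋯d_k)·P_{ω_i} A`. -/
noncomputable def sampleAvg (A : Tensor d) (n : ℕ) (s : Fin n → ∀ j, Fin (d j)) : Tensor d :=
  fun a => (1 / (n : ℝ)) * ∑ i : Fin n, (∏ j, (d j : ℝ)) * Pentry (s i) A a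

/-- `Y` is `μ`-incoherent. -/
noncomputable def muIncoherent (μ : ℝ) (Y : Tensor d) : Prop :=
  ∀ j, ∀ u : EuclideanSpace ℝ (Fin (d j)), ‖u‖ ≤ 1 →
    linf (fun i => projMode Y j u i) ≤ Real.sqrt (μ * (tuckerRank Y j : ℝ) / (d j : ℝ))

open Finset Function Matrix

/-!
Let `Y = u₁ ⊗ ⋯ ⊗ u_k ∈ U_{j₁j₂}(δ)` and split every factor as `u_j = p_j + q_j` with
`p_j = P_j u_j`. Since `Q⁰_X` and `Q_X^⊥` are self-adjoint and `Q⁰_X W₀ = W₀`,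
`⟨Y, W₀ + Q_X^⊥ W₁⟩ = ⟨p₁ ⊗ ⋯ ⊗ p_k, W₀⟩ + ⟨Q_X^⊥ Y, W₁⟩`, and the first term is at most `∏ ‖p_j‖`.
Rank the modes so that `j₁, j₂` come first. Telescoping `⊗ u_j - ⊗ p_j` twice writes `Q_X^⊥ Y`
as a sum over pairs `m < m'` of rank-one tensors with factors `q_m, q_{m'}` in modes `m, m'`,
`p_j` in modes below `m'` and `u_j` in modes above `m'`. Every factor other than `q_m, q_{m'}` is
δ-incoherent (by the hypothesis on `P_j`, resp. because modes above `m'` avoid `j₁, j₂`), so each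
pair contributes at most `‖q_m‖ ‖q_{m'}‖ ‖W₁‖_{∘,δ}`. Finally `∏ ‖p_j‖ ≤ ‖p_m‖ ‖p_{m'}‖` and
`‖p_m‖ ‖p_{m'}‖ + ‖q_m‖ ‖q_{m'}‖ ≤ 1` for each of the `k(k-1)/2` pairs; averaging gives `1`.
-/

theorem prod_sub_prod_sub_sum_eq_sum_pairs {ι κ R : Type*} [DecidableEq ι] [LinearOrder κ]
    [CommRing R] {r : ι → κ} (hr : Injective r) {x y z : ι → R} (hxyz : ∀ i, x i = y i + z i)
    (s : Finset ι) :
    ∏ i ∈ s, x i - ∏ i ∈ s, y i - ∑ j ∈ s, ∏ i ∈ s, (if i = j then z i else y i) =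
      ∑ m' ∈ s, ∑ m ∈ s with r m < r m',
        ∏ i ∈ s, (if i = m ∨ i = m' then z i else if r i < r m' then y i else x i) := by
  induction s using Finset.induction_on_max_value r with
  | empty => simp
  | insert a s ha hmax ih =>
    have hne : ∀ i ∈ s, i ≠ a := fun i hi => ne_of_mem_of_not_mem hi ha
    have hlt : ∀ i ∈ s, r i < r a := fun i hi => (hmax i hi).lt_of_ne (hr.ne (hne i hi))
    have hsingle : ∀ j ∈ s, ∏ i ∈ insert a s, (if i = j then z i else y i) =
        y a * ∏ i ∈ s, (if i = j then z i else y i) := fun j hj => by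
      rw [prod_insert ha, if_neg (hne j hj).symm]
    have hsingle_top : ∏ i ∈ insert a s, (if i = a then z i else y i) = z a * ∏ i ∈ s, y i := by
      rw [prod_insert ha, if_pos rfl, prod_congr rfl fun i hi => if_neg (hne i hi)]
    have hpair : ∀ m' ∈ s, ∑ m ∈ insert a s with r m < r m',
        ∏ i ∈ insert a s, (if i = m ∨ i = m' then z i else if r i < r m' then y i else x i) =
        x a * ∑ m ∈ s with r m < r m',
          ∏ i ∈ s, (if i = m ∨ i = m' then z i else if r i < r m' then y i else x i) :=
      fun m' hm' => by
        rw [filter_insert, if_neg (hlt m' hm').not_gt, mul_sum]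
        refine sum_congr rfl fun m hm => ?_
        rw [prod_insert ha, if_neg, if_neg (hlt m' hm').not_gt]
        rintro (h | h)
        · exact hne m (mem_filter.mp hm).1 h.symm
        · exact hne m' hm' h.symm
    have hpair_top : ∑ m ∈ insert a s with r m < r a,
        ∏ i ∈ insert a s, (if i = m ∨ i = a then z i else if r i < r a then y i else x i) =
        z a * ∑ m ∈ s, ∏ i ∈ s, (if i = m then z i else y i) := by
      rw [filter_insert, if_neg (lt_irrefl _), filter_true_of_mem hlt, mul_sum]
      refine sum_congr rfl fun m hm => ?_
      rw [prod_insert ha, if_pos (Or.inr rfl)]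
      refine congrArg _ (prod_congr rfl fun i hi => ?_)
      simp only [hne i hi, or_false, hlt i hi, if_true]
    -- adjoining the maximal element `a` turns both sides into `x a * (…) + z a * ∑ …`
    rw [prod_insert ha, prod_insert ha, sum_insert ha, sum_insert ha, hsingle_top,
      sum_congr rfl hsingle, hpair_top, sum_congr rfl hpair, ← mul_sum, ← mul_sum, ← ih, hxyz a]
    ring

lemma two_mul_sum_card_filter_lt {ι κ : Type*} [Fintype ι] [LinearOrder κ] {r : ι → κ}
    (hr : Injective r) :
    2 * ∑ m', #{m | r m < r m'} = Fintype.card ι * (Fintype.card ι - 1) := by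
  have hswap : ∑ m', #{m | r m < r m'} = ∑ m', #{m | r m' < r m} := by
    simp only [card_filter]
    exact sum_comm
  have hsplit : ∀ m', #{m | r m < r m'} + #{m | r m' < r m} = Fintype.card ι - 1 := fun m' => by
    classical
    rw [← card_union_of_disjoint (disjoint_filter.2 fun _ _ h h' => lt_asymm h h'), ← filter_or]
    have : ({m | r m < r m' ∨ r m' < r m} : Finset ι) = univ.erase m' := by
      ext m
      simp [lt_or_lt_iff_ne, hr.ne_iff]
    rw [this, card_erase_of_mem (mem_univ _), card_univ]
  calc 2 * ∑ m', #{m | r m < r m'}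
      = ∑ m', #{m | r m < r m'} + ∑ m', #{m | r m' < r m} := by rw [two_mul, ← hswap]
    _ = Fintype.card ι * (Fintype.card ι - 1) := by
      rw [← sum_add_distrib, sum_congr rfl fun m' _ => hsplit m', sum_const, card_univ, smul_eq_mul]

lemma prod_add_mul_le_one {ι : Type*} [Fintype ι] [DecidableEq ι] {a b : ι → ℝ}
    (ha : ∀ i, 0 ≤ a i) (hab : ∀ i, a i ^ 2 + b i ^ 2 ≤ 1) {m m' : ι} (hm : m ≠ m') :
    ∏ i, a i + b m * b m' ≤ 1 := by
  have ha1 : ∀ i, a i ≤ 1 := fun i => by nlinarith [hab i, sq_nonneg (b i), ha i]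
  have hrest : ∏ i ∈ (univ.erase m).erase m', a i ≤ 1 :=
    prod_le_one (fun i _ => ha i) (fun i _ => ha1 i)
  rw [← mul_prod_erase univ a (mem_univ m),
    ← mul_prod_erase _ a (mem_erase.2 ⟨hm.symm, mem_univ m'⟩)]
  nlinarith [mul_le_of_le_one_right (mul_nonneg (ha m) (ha m')) hrest, hab m, hab m',
    sq_nonneg (a m - a m'), sq_nonneg (b m - b m')]

lemma prod_add_sum_pairs_le_one {ι κ : Type*} [Fintype ι] [DecidableEq ι] [LinearOrder κ]
    {r : ι → κ} (hr : Injective r) {a b : ι → ℝ} (ha : ∀ i, 0 ≤ a i)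
    (hab : ∀ i, a i ^ 2 + b i ^ 2 ≤ 1) :
    ∏ i, a i + ∑ m', ∑ m with r m < r m',
      b m * b m' * (2 / ((Fintype.card ι : ℝ) * ((Fintype.card ι : ℝ) - 1))) ≤ 1 := by
  set n := Fintype.card ι
  set B := 2 / ((n : ℝ) * ((n : ℝ) - 1))
  set A := ∏ i, a i
  have hB : 0 ≤ B := by
    rcases Nat.eq_zero_or_pos n with hn | hn
    · simp [B, hn]
    · have : (1 : ℝ) ≤ n := by exact_mod_cast hn
      positivity
  set S := ∑ m', #{m | r m < r m'} with hS
  have hcount : (S : ℝ) * B ≤ 1 := by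
    have hcast : ((n * (n - 1) : ℕ) : ℝ) = n * (n - 1) := by
      rcases Nat.eq_zero_or_pos n with hn | hn
      · simp [hn]
      · push_cast [Nat.cast_sub hn]
        ring
    have h2 : (2 * S : ℝ) = n * (n - 1) := by
      rw [← hcast]
      exact_mod_cast two_mul_sum_card_filter_lt hr
    calc (S : ℝ) * B = (2 * S) / (n * (n - 1)) := by ring
      _ ≤ 1 := by rw [h2]; exact div_self_le_one _
  have hA : A ≤ 1 :=
    prod_le_one (fun i _ => ha i) (fun i _ => by nlinarith [hab i, sq_nonneg (b i), ha i])
  calc A + ∑ m', ∑ m with r m < r m', b m * b m' * B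
      ≤ A + ∑ m', ∑ m with r m < r m', (1 - A) * B := by
        gcongr with m' _ m hm
        have := prod_add_mul_le_one ha hab (ne_of_apply_ne r (mem_filter.mp hm).2.ne)
        linarith
    _ = A + (S : ℝ) * B * (1 - A) := by
        rw [hS, Nat.cast_sum, sum_mul, sum_mul]
        simp only [sum_const, nsmul_eq_mul]
        exact congrArg _ (sum_congr rfl fun _ _ => by ring)
    _ ≤ A + 1 * (1 - A) := by gcongr
    _ = 1 := by ring

section Vectors

variable {n : ℕ}

lemma l2_eq_norm (u : Fin n → ℝ) : l2 u = ‖WithLp.toLp 2 u‖ := by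
  simp [l2, EuclideanSpace.norm_eq]

lemma l2_nonneg (u : Fin n → ℝ) : 0 ≤ l2 u := Real.sqrt_nonneg _

lemma l2_smul (c : ℝ) (u : Fin n → ℝ) : l2 (c • u) = |c| * l2 u := by
  rw [l2_eq_norm, l2_eq_norm, WithLp.toLp_smul, norm_smul, Real.norm_eq_abs]

lemma l2_inv_smul_self_le_one (u : Fin n → ℝ) : l2 ((l2 u)⁻¹ • u) ≤ 1 := by
  rw [l2_smul, abs_inv, abs_of_nonneg (l2_nonneg u)]
  exact inv_mul_le_one

lemma l2_smul_inv_smul_self (u : Fin n → ℝ) : l2 u • (l2 u)⁻¹ • u = u := by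
  rcases eq_or_ne (l2 u) 0 with h | h
  · have hu : u = 0 := by simpa [l2_eq_norm] using h
    simp [hu]
  · exact smul_inv_smul₀ h u

lemma abs_le_l2 (u : Fin n → ℝ) (i : Fin n) : |u i| ≤ l2 u := by
  rw [l2, ← Real.sqrt_sq_eq_abs]
  exact Real.sqrt_le_sqrt (single_le_sum (fun j _ => sq_nonneg (u j)) (mem_univ i))

end Vectors

lemma tinner_eq_dotProduct (X Y : Tensor d) : tinner X Y = X ⬝ᵥ Y := rfl

lemma rankOne_smul (c : Fin k → ℝ) (u : ∀ j, Fin (d j) → ℝ) :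
    rankOne (fun j => c j • u j) = (∏ j, c j) • rankOne u := by
  ext a
  simp [rankOne, prod_mul_distrib]

lemma rankOne_eq_smul_rankOne_normalize (v : ∀ j, Fin (d j) → ℝ) (T : Finset (Fin k)) :
    rankOne v = (∏ j ∈ T, l2 (v j)) •
      rankOne (fun j => if j ∈ T then (l2 (v j))⁻¹ • v j else v j) := by
  rw [← prod_ite_mem_eq, ← rankOne_smul]
  congr 1
  ext j : 1
  split_ifs
  · exact (l2_smul_inv_smul_self (v j)).symm
  · exact (one_smul ℝ (v j)).symm

lemma abs_rankOne_le_one {u : ∀ j, Fin (d j) → ℝ} (hu : ∀ j, l2 (u j) ≤ 1)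
    (a : ∀ j, Fin (d j)) : |rankOne u a| ≤ 1 := by
  rw [rankOne, abs_prod]
  exact prod_le_one (fun j _ => abs_nonneg _) (fun j _ => (abs_le_l2 (u j) (a j)).trans (hu j))

lemma bddAbove_tinner_rankOne (W : Tensor d) :
    BddAbove {r | ∃ u : ∀ j, Fin (d j) → ℝ, (∀ j, l2 (u j) ≤ 1) ∧ r = tinner W (rankOne u)} := by
  refine ⟨∑ a, |W a|, ?_⟩
  rintro _ ⟨u, hu, rfl⟩
  refine sum_le_sum fun a _ => ?_
  calc W a * rankOne u a ≤ |W a| * |rankOne u a| := by rw [← abs_mul]; exact le_abs_self _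
    _ ≤ |W a| := mul_le_of_le_one_right (abs_nonneg _) (abs_rankOne_le_one hu a)

lemma tinner_rankOne_le_spectralNorm (W : Tensor d) (v : ∀ j, Fin (d j) → ℝ) :
    tinner W (rankOne v) ≤ (∏ j, l2 (v j)) * spectralNorm W := by
  rw [rankOne_eq_smul_rankOne_normalize v univ, tinner_eq_dotProduct, dotProduct_smul,
    smul_eq_mul]
  refine mul_le_mul_of_nonneg_left (le_csSup (bddAbove_tinner_rankOne W) ⟨_, fun j => ?_, rfl⟩)
    (prod_nonneg fun j _ => l2_nonneg _)
  simpa using l2_inv_smul_self_le_one (v j)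

lemma tinner_rankOne_le_onorm (δ : Fin k → ℝ) (W : Tensor d) (v : ∀ j, Fin (d j) → ℝ)
    {m m' : Fin k} (hm : m ≠ m')
    (hv : ∀ j, j ≠ m → j ≠ m' → l2 (v j) ≤ 1 ∧ linf (v j) ≤ δ j) :
    tinner (rankOne v) W ≤ l2 (v m) * l2 (v m') * onorm δ W := by
  set w := fun j => if j ∈ ({m, m'} : Finset (Fin k)) then (l2 (v j))⁻¹ • v j else v j
  have hw : rankOne w ∈ Uset (d := d) δ := by
    have hw1 : ∀ j, l2 (w j) ≤ 1 := fun j => by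
      by_cases hj : j ∈ ({m, m'} : Finset (Fin k))
      · simpa only [w, if_pos hj] using l2_inv_smul_self_le_one (v j)
      · simp only [mem_insert, mem_singleton, not_or] at hj
        simpa [w, hj] using (hv j hj.1 hj.2).1
    have hw2 : ∀ j, j ≠ m → j ≠ m' → linf (w j) ≤ δ j := fun j h h' => by
      simpa [w, h, h'] using (hv j h h').2
    rcases hm.lt_or_gt with hlt | hlt
    · exact ⟨m, m', hlt, w, hw1, hw2, rfl⟩
    · exact ⟨m', m, hlt, w, hw1, fun j h' h => hw2 j h h', rfl⟩
  have hbdd : BddAbove {r | ∃ Y ∈ Uset (d := d) δ, r = tinner Y W} := by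
    refine (bddAbove_tinner_rankOne W).mono ?_
    rintro _ ⟨_, ⟨_, _, _, u, hu, _, rfl⟩, rfl⟩
    exact ⟨u, hu, tinner_eq_dotProduct _ _ ▸ dotProduct_comm _ _⟩
  rw [rankOne_eq_smul_rankOne_normalize v {m, m'}, prod_pair hm, tinner_eq_dotProduct,
    smul_dotProduct, smul_eq_mul]
  exact mul_le_mul_of_nonneg_left (le_csSup hbdd ⟨_, hw, rfl⟩)
    (mul_nonneg (l2_nonneg _) (l2_nonneg _))

lemma kronApply_rankOne (A : ∀ j, Matrix (Fin (d j)) (Fin (d j)) ℝ) (u : ∀ j, Fin (d j) → ℝ) :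
    kronApply A (rankOne u) = rankOne (fun j => A j *ᵥ u j) := by
  ext a
  simp only [kronApply, rankOne, mulVec, dotProduct, prod_univ_sum, Fintype.piFinset_univ,
    prod_mul_distrib]

lemma tinner_kronApply (A : ∀ j, Matrix (Fin (d j)) (Fin (d j)) ℝ) (W Z : Tensor d) :
    tinner (kronApply A W) Z = tinner W (kronApply (fun j => (A j)ᵀ) Z) := by
  simp only [tinner, kronApply, sum_mul, mul_sum, transpose_apply]
  rw [sum_comm]
  exact sum_congr rfl fun _ _ => sum_congr rfl fun _ _ => by ring

lemma tinner_kronApply_of_transpose_eq (A : ∀ j, Matrix (Fin (d j)) (Fin (d j)) ℝ)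
    (hA : ∀ j, (A j)ᵀ = A j) (W Z : Tensor d) :
    tinner (kronApply A W) Z = tinner W (kronApply A Z) := by
  simpa only [hA] using tinner_kronApply A W Z

lemma projMode_eq_starProjection (X : Tensor d) (j : Fin k) :
    projMode X j = (fiberSpan X j).starProjection := rfl

lemma Pmat_transpose (X : Tensor d) (j : Fin k) : (Pmat X j)ᵀ = Pmat X j := by
  ext a b
  have h := (fiberSpan X j).inner_starProjection_left_eq_right
    (EuclideanSpace.single a (1 : ℝ)) (EuclideanSpace.single b 1)
  simp only [EuclideanSpace.inner_single_left, EuclideanSpace.inner_single_right] at h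
  simpa [Pmat, projMode_eq_starProjection] using h

lemma Pmat_mulVec (X : Tensor d) (j : Fin k) (w : Fin (d j) → ℝ) :
    Pmat X j *ᵥ w = ⇑(projMode X j (WithLp.toLp 2 w)) := by
  conv_rhs => rw [← (EuclideanSpace.basisFun (Fin (d j)) ℝ).sum_repr (WithLp.toLp 2 w)]
  ext i
  simp [Pmat, mulVec, dotProduct, mul_comm]

lemma l2_Pmat_mulVec_le (X : Tensor d) (j : Fin k) (w : Fin (d j) → ℝ) :
    l2 (Pmat X j *ᵥ w) ≤ l2 w := by
  rw [Pmat_mulVec, l2_eq_norm, l2_eq_norm]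
  exact Submodule.norm_starProjection_apply_le _ _

lemma l2_sq_Pmat_mulVec_add (X : Tensor d) (j : Fin k) (w : Fin (d j) → ℝ) :
    l2 (Pmat X j *ᵥ w) ^ 2 + l2 (w - Pmat X j *ᵥ w) ^ 2 = l2 w ^ 2 := by
  have h := Submodule.norm_sq_eq_add_norm_sq_starProjection (WithLp.toLp 2 w) (fiberSpan X j)
  rw [Submodule.starProjection_orthogonal'] at h
  rw [Pmat_mulVec, l2_eq_norm, l2_eq_norm, l2_eq_norm, h]
  simp [projMode_eq_starProjection]

lemma tinner_QX (X Y W : Tensor d) : tinner (QX X Y) W = tinner Y (QX X W) := by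
  simp only [QX, Q0, tinner_eq_dotProduct, add_dotProduct, dotProduct_add]
  congr 1
  · exact tinner_kronApply_of_transpose_eq _ (Pmat_transpose X) Y W
  · rw [sum_dotProduct, dotProduct_sum]
    refine sum_congr rfl fun j _ => tinner_kronApply_of_transpose_eq _ (fun l => ?_) Y W
    split_ifs <;> simp [transpose_sub, Pmat_transpose]

lemma tinner_Qperp (X Y W : Tensor d) : tinner (Qperp X Y) W = tinner Y (Qperp X W) := by
  simp only [Qperp, tinner_eq_dotProduct, sub_dotProduct, dotProduct_sub]
  exact congrArg _ (tinner_QX X Y W)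

def pairFactor {κ : Type*} [LinearOrder κ] (r : Fin k → κ) (u p : ∀ j, Fin (d j) → ℝ)
    (m m' : Fin k) : ∀ j, Fin (d j) → ℝ :=
  fun j => if j = m ∨ j = m' then u j - p j else if r j < r m' then p j else u j

lemma Qperp_rankOne {κ : Type*} [LinearOrder κ] (X : Tensor d) {r : Fin k → κ}
    (hr : Injective r) (u : ∀ j, Fin (d j) → ℝ) :
    Qperp X (rankOne u) = ∑ m', ∑ m with r m < r m',
      rankOne (pairFactor r u (fun j => Pmat X j *ᵥ u j) m m') := by
  set p := fun j => Pmat X j *ᵥ u j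
  have hQ0 : Q0 X (rankOne u) = rankOne p := kronApply_rankOne _ _
  have hQj : ∀ j, kronApply (fun l => if l = j then 1 - Pmat X l else Pmat X l) (rankOne u) =
      rankOne (fun l => if l = j then u l - p l else p l) := fun j => by
    rw [kronApply_rankOne]
    congr 1
    ext l : 1
    split_ifs <;> simp [sub_mulVec, p]
  ext a
  have key := prod_sub_prod_sub_sum_eq_sum_pairs hr (x := fun j => u j (a j))
    (y := fun j => p j (a j)) (z := fun j => u j (a j) - p j (a j)) (fun j => by ring) univ
  simp only [Qperp, QX, hQ0, hQj, Pi.sub_apply, Pi.add_apply, Finset.sum_apply, rankOne, pairFactor,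
    ite_apply] at key ⊢
  rw [← key, sub_sub]

lemma tinner_rankOne_le_of_Q0_eq {X W : Tensor d} (hW : Q0 X W = W) (u : ∀ j, Fin (d j) → ℝ) :
    tinner (rankOne u) W ≤ (∏ j, l2 (Pmat X j *ᵥ u j)) * spectralNorm W := by
  calc tinner (rankOne u) W = tinner (rankOne u) (Q0 X W) := by rw [hW]
    _ = tinner W (rankOne fun j => Pmat X j *ᵥ u j) := by
      rw [Q0, ← tinner_kronApply_of_transpose_eq _ (Pmat_transpose X), kronApply_rankOne,
        tinner_eq_dotProduct, dotProduct_comm]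
      rfl
    _ ≤ _ := tinner_rankOne_le_spectralNorm W _

lemma tinner_rankOne_Qperp_le (X : Tensor d) (δ : Fin k → ℝ)
    (hmax : ∀ j, ∀ u : EuclideanSpace ℝ (Fin (d j)), ‖u‖ ≤ 1 →
      linf (fun i => projMode X j u i) ≤ δ j)
    (W : Tensor d) {r : Fin k → ℕ} (hr : Injective r) (u : ∀ j, Fin (d j) → ℝ)
    (hu : ∀ j, l2 (u j) ≤ 1) (hinc : ∀ j, 2 ≤ r j → linf (u j) ≤ δ j) :
    tinner (rankOne u) (Qperp X W) ≤ ∑ m', ∑ m with r m < r m',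
      l2 (u m - Pmat X m *ᵥ u m) * l2 (u m' - Pmat X m' *ᵥ u m') * onorm δ W := by
  rw [← tinner_Qperp, Qperp_rankOne X hr u, tinner_eq_dotProduct, sum_dotProduct]
  refine sum_le_sum fun m' _ => ?_
  rw [sum_dotProduct]
  refine sum_le_sum fun m hm => ?_
  have hlt : r m < r m' := (mem_filter.mp hm).2
  have hne : m ≠ m' := ne_of_apply_ne r hlt.ne
  have hfactor : ∀ j, j ≠ m → j ≠ m' →
      l2 (pairFactor r u (fun j => Pmat X j *ᵥ u j) m m' j) ≤ 1 ∧
        linf (pairFactor r u (fun j => Pmat X j *ᵥ u j) m m' j) ≤ δ j := by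
    intro j hjm hjm'
    by_cases hj : r j < r m'
    · simp only [pairFactor, hjm, hjm', or_self, if_false, hj, if_true]
      refine ⟨(l2_Pmat_mulVec_le X j (u j)).trans (hu j), ?_⟩
      rw [Pmat_mulVec]
      exact hmax j _ (l2_eq_norm (u j) ▸ hu j)
    · simp only [pairFactor, hjm, hjm', or_self, if_false, hj]
      have : r m' < r j := (not_lt.mp hj).lt_of_ne (hr.ne (Ne.symm hjm'))
      exact ⟨hu j, hinc j (by omega)⟩
  simpa [pairFactor, hne, tinner_eq_dotProduct] using tinner_rankOne_le_onorm δ W _ hne hfactor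

lemma exists_injective_rank_ge_two_imp_ne (j1 j2 : Fin k) :
    ∃ r : Fin k → ℕ, Injective r ∧ ∀ j, 2 ≤ r j → j ≠ j1 ∧ j ≠ j2 := by
  refine ⟨fun j => if j = j1 then 0 else if j = j2 then 1 else j + 2, fun a b hab => ?_,
    fun j hj => ?_⟩
  · simp only at hab
    split_ifs at hab <;> omega
  · simp only at hj
    split_ifs at hj with h1 h2
    exacts [absurd hj (by omega), absurd hj (by omega), ⟨h1, h2⟩]

theorem statement3_general {k : ℕ} {d : Fin k → ℕ} (X : Tensor d)
    (δ : Fin k → ℝ)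
    (hmax : ∀ j, ∀ u : EuclideanSpace ℝ (Fin (d j)), ‖u‖ ≤ 1 →
      linf (fun i => projMode X j u i) ≤ δ j)
    (W0 : Tensor d) (hW0 : Q0 X W0 = W0) (hW0norm : spectralNorm W0 ≤ 1) :
    ∀ W1 : Tensor d, onorm δ W1 ≤ 2 / ((k : ℝ) * ((k : ℝ) - 1)) →
      onorm δ (W0 + Qperp X W1) ≤ 1 := by
  intro W1 hW1
  refine Real.sSup_le ?_ zero_le_one
  rintro _ ⟨_, ⟨j1, j2, -, u, hu, hinc, rfl⟩, rfl⟩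
  obtain ⟨r, hr, hr2⟩ := exists_injective_rank_ge_two_imp_ne j1 j2
  have hW0_le := tinner_rankOne_le_of_Q0_eq hW0 u
  have hW1_le := tinner_rankOne_Qperp_le X δ hmax W1 hr u hu
    fun j hj => hinc j (hr2 j hj).1 (hr2 j hj).2
  have hpyth : ∀ j, l2 (Pmat X j *ᵥ u j) ^ 2 + l2 (u j - Pmat X j *ᵥ u j) ^ 2 ≤ 1 := fun j =>
    (l2_sq_Pmat_mulVec_add X j (u j)).trans_le (pow_le_one₀ (l2_nonneg _) (hu j))
  calc tinner (rankOne u) (W0 + Qperp X W1)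
      = tinner (rankOne u) W0 + tinner (rankOne u) (Qperp X W1) := dotProduct_add _ _ _
    _ ≤ ∏ j, l2 (Pmat X j *ᵥ u j) + ∑ m', ∑ m with r m < r m',
          l2 (u m - Pmat X m *ᵥ u m) * l2 (u m' - Pmat X m' *ᵥ u m') *
            (2 / ((k : ℝ) * ((k : ℝ) - 1))) := by
      gcongr ?_ + ?_
      · exact hW0_le.trans (mul_le_of_le_one_right (prod_nonneg fun j _ => l2_nonneg _) hW0norm)
      · refine hW1_le.trans (sum_le_sum fun _ _ => sum_le_sum fun _ _ => ?_)
        exact mul_le_mul_of_nonneg_left hW1 (mul_nonneg (l2_nonneg _) (l2_nonneg _))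
    _ ≤ 1 := by
      simpa using prod_add_sum_pairs_le_one hr (fun j => l2_nonneg _) hpyth

/-- key step in the proof of the subdifferential theorem: if `δ_j`
dominates the incoherence of `L_j(X)` for every `j`, `W₀` satisfies `Q⁰_X W₀ = W₀` and
`‖W₀‖ ≤ 1` (spectral norm), then for every `W₁` with `‖W₁‖_{∘,δ} ≤ 2/(k(k−1))` one has
`‖W₀ + Q_X^⊥ W₁‖_{∘,δ} ≤ 1`. -/
theorem statement3 {k : ℕ} (hk : 2 ≤ k) {d : Fin k → ℕ} (X : Tensor d)
    (δ : Fin k → ℝ) (hδ : ∀ j, δ j ∈ Set.Ioc (0 : ℝ) 1)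
    (hmax : ∀ j, ∀ u : EuclideanSpace ℝ (Fin (d j)), ‖u‖ ≤ 1 →
      linf (fun i => projMode X j u i) ≤ δ j)
    (W0 : Tensor d) (hW0 : Q0 X W0 = W0) (hW0norm : spectralNorm W0 ≤ 1) :
    ∀ W1 : Tensor d, onorm δ W1 ≤ 2 / ((k : ℝ) * ((k : ℝ) - 1)) →
      onorm δ (W0 + Qperp X W1) ≤ 1 :=
  statement3_general X δ hmax W0 hW0 hW0norm

end IncoherentTensor
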